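/- Let n ≥ 1 and u₁,...,uₙ, v₁,...,vₙ be reals each with Σᵢuᵢ = Σᵢvᵢ = 0, and with all λuᵢ + 1/n > 0 and λvᵢ + 1/n > 0 for λ ∈ [0,1]. Define h(λ) = f(λ) - g(λ) where f(λ) = -Σᵢ(λuᵢ+1/n)log₂(λuᵢ+1/n) and g(λ) = -Σᵢ(λvᵢ+1/n)log₂(λvᵢ+1/n). Then h''(λ)·∏ᵢ(λuᵢ+1/n)·∏ᵢ(λvᵢ+1/n) coincides on (0,1) with a polynomial of degree at most 2n - 2. -/

import Mathlib

/-!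
Since `logb 2 = log / log 2`, the entropy `f` along the line `λ ↦ 1/n + λ u` has
`f'' = -(∑ i, u i ^ 2 / (λ u i + 1/n)) / log 2`. Over the common denominator
`∏ i, (λ u i + 1/n)` its numerator `∑ i, u i ^ 2 ∏ j ≠ i, (λ u j + 1/n)` has degree at most `n - 2`
rather than `n - 1`: since `∑ i, u i = 0`, multiplying it by `λ` gives
`-(1/n) ∑ i, u i ∏ j ≠ i, (λ u j + 1/n)`, of degree at most `n - 1`. The same holds for `g`, and
`h'' ∏ (λ u i + 1/n) ∏ (λ v i + 1/n)` is a difference of two such numerators, each multiplied by the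
other denominator (degree `n`).
-/

open Polynomial Finset Filter Topology Real

section AffineProducts

variable {R ι : Type*}

noncomputable def affineProd [CommRing R] (w : ι → R) (c : R) (s : Finset ι) : R[X] :=
  ∏ j ∈ s, (C (w j) * X + C c)

noncomputable def sqCofactorSum [Fintype ι] [DecidableEq ι] [CommRing R] (w : ι → R) (c : R) :
    R[X] :=
  ∑ i, C (w i ^ 2) * affineProd w c (univ.erase i)

lemma natDegree_affineProd_le [CommRing R] (w : ι → R) (c : R) (s : Finset ι) :
    (affineProd w c s).natDegree ≤ #s :=
  (natDegree_prod_le _ _).trans <|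
    (sum_le_card_nsmul s (fun j => (C (w j) * X + C c).natDegree) 1
      fun _ _ => natDegree_linear_le).trans_eq (smul_eq_mul _ _ |>.trans (mul_one _))

lemma eval_affineProd [CommRing R] (w : ι → R) (c t : R) (s : Finset ι) :
    (affineProd w c s).eval t = ∏ j ∈ s, (t * w j + c) := by
  simp only [affineProd, eval_prod, eval_add, eval_mul, eval_C, eval_X, mul_comm (w _)]

lemma sqCofactorSum_eq_zero_or_natDegree_add_two_le [Fintype ι] [DecidableEq ι] [CommRing R]
    [Nontrivial R] (w : ι → R) (c : R) (hw : ∑ i, w i = 0) :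
    sqCofactorSum w c = 0 ∨ (sqCofactorSum w c).natDegree + 2 ≤ Fintype.card ι := by
  set B := ∑ i, C (w i) * affineProd w c (univ.erase i)
  -- `w i ^ 2 * X = w i * (w i * X + c) - c * w i`, and `∑ i, w i = 0` kills the first part
  have hXA : X * sqCofactorSum w c = C (-c) * B := by
    have hterm : ∀ i, X * (C (w i ^ 2) * affineProd w c (univ.erase i))
        = C (w i) * affineProd w c univ - C c * (C (w i) * affineProd w c (univ.erase i)) :=
      fun i => by
        rw [affineProd, affineProd, ← mul_prod_erase univ _ (mem_univ i), map_pow]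
        ring
    simp only [sqCofactorSum, B, mul_sum, hterm, map_neg, sum_sub_distrib, ← sum_mul,
      ← map_sum, hw, map_zero, zero_mul, zero_sub, neg_mul, sum_neg_distrib]
  have hB : B.natDegree ≤ Fintype.card ι - 1 :=
    natDegree_sum_le_of_forall_le _ _ fun i _ => (natDegree_C_mul_le _ _).trans <|
      (natDegree_affineProd_le w c _).trans (by simp [card_erase_of_mem])
  refine or_iff_not_imp_left.2 fun h0 => ?_
  have hXA_le : (X * sqCofactorSum w c).natDegree ≤ Fintype.card ι - 1 :=
    hXA ▸ (natDegree_C_mul_le _ _).trans hB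
  rw [natDegree_X_mul h0] at hXA_le
  omega

lemma eval_sqCofactorSum [Fintype ι] [DecidableEq ι] [Field R] (w : ι → R) (c : R) {t : R}
    (ht : ∀ i, t * w i + c ≠ 0) :
    (sqCofactorSum w c).eval t = (∑ i, w i ^ 2 / (t * w i + c)) * ∏ i, (t * w i + c) := by
  simp only [sqCofactorSum, eval_finsetSum, eval_mul, eval_C, eval_affineProd, sum_mul]
  refine sum_congr rfl fun i _ => ?_
  rw [← mul_prod_erase univ _ (mem_univ i), ← mul_assoc, div_mul_cancel₀ _ (ht i)]

lemma natDegree_sqCofactorSum_mul_affineProd_le [Fintype ι] [DecidableEq ι] [CommRing R]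
    [Nontrivial R] (w w' : ι → R) (c : R) (hw : ∑ i, w i = 0) :
    (sqCofactorSum w c * affineProd w' c univ).natDegree ≤ 2 * Fintype.card ι - 2 := by
  have hw'_le := natDegree_affineProd_le w' c univ
  rw [card_univ] at hw'_le
  rcases sqCofactorSum_eq_zero_or_natDegree_add_two_le w c hw with h0 | hw_le
  · simp [h0]
  exact natDegree_mul_le.trans (by omega)

end AffineProducts

section EntropyAlongLine

variable {ι : Type*} [Fintype ι] (w : ι → ℝ) (c : ℝ) {t : ℝ}

lemma neg_sum_mul_logb_eq_sum_negMulLog_div (x : ι → ℝ) (b : ℝ) :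
    -∑ i, x i * logb b (x i) = (∑ i, negMulLog (x i)) / log b := by
  simp only [negMulLog, logb, sum_div, ← sum_neg_distrib]
  exact sum_congr rfl fun i _ => by ring

lemma eventually_forall_mul_add_ne_zero (ht : ∀ i, t * w i + c ≠ 0) :
    ∀ᶠ s in 𝓝 t, ∀ i, s * w i + c ≠ 0 :=
  eventually_all.2 fun i =>
    ((continuous_id.mul continuous_const).add continuous_const).continuousAt.eventually_ne (ht i)

lemma hasDerivAt_sum_negMulLog_mul_add (ht : ∀ i, t * w i + c ≠ 0) :
    HasDerivAt (fun s => ∑ i, negMulLog (s * w i + c))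
      (∑ i, w i * (-log (t * w i + c) - 1)) t := by
  refine HasDerivAt.fun_sum fun i _ => ?_
  rw [mul_comm]
  exact (hasDerivAt_negMulLog (ht i)).comp t ((hasDerivAt_mul_const (w i)).add_const c)

lemma hasDerivAt_deriv_sum_negMulLog_mul_add (ht : ∀ i, t * w i + c ≠ 0) :
    HasDerivAt (deriv fun s => ∑ i, negMulLog (s * w i + c))
      (-∑ i, w i ^ 2 / (t * w i + c)) t := by
  have hderiv : (deriv fun s => ∑ i, negMulLog (s * w i + c)) =ᶠ[𝓝 t]
      fun s => ∑ i, w i * (-log (s * w i + c) - 1) := by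
    filter_upwards [eventually_forall_mul_add_ne_zero w c ht] with s hs
    exact (hasDerivAt_sum_negMulLog_mul_add w c hs).deriv
  refine HasDerivAt.congr_of_eventuallyEq ?_ hderiv
  rw [← sum_neg_distrib]
  refine HasDerivAt.fun_sum fun i _ => ?_
  have h := ((((hasDerivAt_mul_const (w i)).add_const c).log (ht i)).fun_neg.sub_const 1).const_mul
    (w i)
  rwa [show w i * -(w i / (t * w i + c)) = -(w i ^ 2 / (t * w i + c)) by ring] at h

lemma deriv_deriv_sub_sum_negMulLog_div (u v : ι → ℝ) (b : ℝ) (hu : ∀ i, t * u i + c ≠ 0)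
    (hv : ∀ i, t * v i + c ≠ 0) :
    deriv (deriv fun s => (∑ i, negMulLog (s * u i + c) - ∑ i, negMulLog (s * v i + c)) / b) t
      = (∑ i, v i ^ 2 / (t * v i + c) - ∑ i, u i ^ 2 / (t * u i + c)) / b := by
  have hderiv : (deriv fun s => (∑ i, negMulLog (s * u i + c) - ∑ i, negMulLog (s * v i + c)) / b)
      =ᶠ[𝓝 t] fun s => (deriv (fun s => ∑ i, negMulLog (s * u i + c)) s
        - deriv (fun s => ∑ i, negMulLog (s * v i + c)) s) / b := by
    filter_upwards [eventually_forall_mul_add_ne_zero u c hu,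
      eventually_forall_mul_add_ne_zero v c hv] with s hsu hsv
    rw [deriv_div_const, deriv_fun_sub (hasDerivAt_sum_negMulLog_mul_add u c hsu).differentiableAt
      (hasDerivAt_sum_negMulLog_mul_add v c hsv).differentiableAt]
  rw [hderiv.deriv_eq, (((hasDerivAt_deriv_sum_negMulLog_mul_add u c hu).fun_sub
    (hasDerivAt_deriv_sum_negMulLog_mul_add v c hv)).div_const b).deriv, neg_sub_neg]

end EntropyAlongLine

theorem stmt_8_general {n : ℕ} (u v : Fin n → ℝ)
    (hu : ∑ i, u i = 0) (hv : ∑ i, v i = 0)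
    (hupos : ∀ l ∈ Set.Icc (0 : ℝ) 1, ∀ i, l * u i + 1 / n > 0)
    (hvpos : ∀ l ∈ Set.Icc (0 : ℝ) 1, ∀ i, l * v i + 1 / n > 0)
    (f g hfun : ℝ → ℝ)
    (hf : ∀ l, f l = -∑ i, (l * u i + 1 / n) * Real.logb 2 (l * u i + 1 / n))
    (hg : ∀ l, g l = -∑ i, (l * v i + 1 / n) * Real.logb 2 (l * v i + 1 / n))
    (hh : ∀ l, hfun l = f l - g l) :
    ∃ p : Polynomial ℝ, p.degree ≤ (2 * n - 2 : ℕ) ∧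
      ∀ l ∈ Set.Ioo (0 : ℝ) 1,
        deriv (deriv hfun) l * (∏ i, (l * u i + 1 / n)) * (∏ i, (l * v i + 1 / n)) =
          p.eval l := by
  set c : ℝ := 1 / n
  have hfun_eq : hfun = fun s =>
      (∑ i, negMulLog (s * u i + c) - ∑ i, negMulLog (s * v i + c)) / log 2 := by
    funext s
    rw [hh, hf, hg, neg_sum_mul_logb_eq_sum_negMulLog_div (fun i => s * u i + c),
      neg_sum_mul_logb_eq_sum_negMulLog_div (fun i => s * v i + c), sub_div]
  have hdeg (w w' : Fin n → ℝ) (hw : ∑ i, w i = 0) :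
      (sqCofactorSum w c * affineProd w' c univ).natDegree ≤ 2 * n - 2 := by
    simpa using natDegree_sqCofactorSum_mul_affineProd_le w w' c hw
  refine ⟨C (log 2)⁻¹ * (sqCofactorSum v c * affineProd u c univ -
    sqCofactorSum u c * affineProd v c univ), degree_le_of_natDegree_le <|
      (natDegree_C_mul_le _ _).trans <| (natDegree_sub_le _ _).trans <|
        max_le (hdeg v u hv) (hdeg u v hu), fun l hl => ?_⟩
  have hu0 : ∀ i, l * u i + c ≠ 0 := fun i => (hupos l (Set.Ioo_subset_Icc_self hl) i).ne'
  have hv0 : ∀ i, l * v i + c ≠ 0 := fun i => (hvpos l (Set.Ioo_subset_Icc_self hl) i).ne'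
  rw [hfun_eq, deriv_deriv_sub_sum_negMulLog_div c u v _ hu0 hv0]
  simp only [eval_mul, eval_sub, eval_C, eval_sqCofactorSum u c hu0, eval_sqCofactorSum v c hv0,
    eval_affineProd]
  ring

theorem stmt_8 {n : ℕ} (hn : 1 ≤ n) (u v : Fin n → ℝ)
    (hu : ∑ i, u i = 0) (hv : ∑ i, v i = 0)
    (hupos : ∀ l ∈ Set.Icc (0 : ℝ) 1, ∀ i, l * u i + 1 / n > 0)
    (hvpos : ∀ l ∈ Set.Icc (0 : ℝ) 1, ∀ i, l * v i + 1 / n > 0)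
    (f g hfun : ℝ → ℝ)
    (hf : ∀ l, f l = -∑ i, (l * u i + 1 / n) * Real.logb 2 (l * u i + 1 / n))
    (hg : ∀ l, g l = -∑ i, (l * v i + 1 / n) * Real.logb 2 (l * v i + 1 / n))
    (hh : ∀ l, hfun l = f l - g l) :
    ∃ p : Polynomial ℝ, p.degree ≤ (2 * n - 2 : ℕ) ∧
      ∀ l ∈ Set.Ioo (0 : ℝ) 1,
        deriv (deriv hfun) l * (∏ i, (l * u i + 1 / n)) * (∏ i, (l * v i + 1 / n)) =
          p.eval l :=
  stmt_8_general u v hu hv hupos hvpos f g hfun hf hg hh
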